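/- arXiv:2312.13259 — 5 statements merged into one kernel-verified Lean document; each statement's English description precedes it below -/
import Mathlib

section
/- Suppose U : [0,T] → ℝ is differentiable with U'(t) = ⟨ψ(t), W'(t)⟩ + ⟨u(t), V'(t)⟩ for all t ∈ [0,T], where ψ, u : [0,T] → E are continuous and W, V : [0,T] → E are continuously differentiable paths in an inner product space E. Define Ξ(t) = ⟨ψ(t), W(t)−W(0)⟩ + ⟨u(t), V(t)−V(0)⟩. Then for every t ∈ [0,T], |Ξ(t) − (U(t)−U(0))| ≤ 2 sup_{s∈[0,t]} ‖ψ(s)−ψ(0)‖ ∫₀ᵗ ‖W'(s)‖ ds + 2 sup_{s∈[0,t]} ‖u(s)−u(0)‖ ∫₀ᵗ ‖V'(s)‖ ds. -/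
open scoped RealInnerProductSpace

/-- If `U` is differentiable on `[0,T]` with
`U'(t) = ⟨ψ(t), W'(t)⟩ + ⟨u(t), V'(t)⟩`, where `ψ, u` are continuous and `W, V` are
continuously differentiable paths in an inner product space `E`, and
`Ξ(t) = ⟨ψ(t), W(t)−W(0)⟩ + ⟨u(t), V(t)−V(0)⟩`, then for every `t ∈ [0,T]`,
`|Ξ(t) − (U(t)−U(0))| ≤ 2 sup_{s∈[0,t]} ‖ψ(s)−ψ(0)‖ ∫₀ᵗ ‖W'(s)‖ ds
+ 2 sup_{s∈[0,t]} ‖u(s)−u(0)‖ ∫₀ᵗ ‖V'(s)‖ ds`. -/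
theorem stmt2 {E : Type*} [NormedAddCommGroup E] [InnerProductSpace ℝ E]
    (T : ℝ) (hT : 0 ≤ T)
    (ψ u W V W' V' : ℝ → E) (U : ℝ → ℝ)
    (hψ : ContinuousOn ψ (Set.Icc 0 T)) (hu : ContinuousOn u (Set.Icc 0 T))
    (hW : ∀ t ∈ Set.Icc (0 : ℝ) T, HasDerivAt W (W' t) t)
    (hV : ∀ t ∈ Set.Icc (0 : ℝ) T, HasDerivAt V (V' t) t)
    (hW' : ContinuousOn W' (Set.Icc 0 T)) (hV' : ContinuousOn V' (Set.Icc 0 T))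
    (hU : ∀ t ∈ Set.Icc (0 : ℝ) T,
      HasDerivAt U (⟪ψ t, W' t⟫ + ⟪u t, V' t⟫) t)
    (Ξ : ℝ → ℝ)
    (hΞ : ∀ t, Ξ t = ⟪ψ t, W t - W 0⟫ + ⟪u t, V t - V 0⟫)
    (t : ℝ) (ht : t ∈ Set.Icc (0 : ℝ) T) :
    |Ξ t - (U t - U 0)| ≤
      2 * (⨆ s : Set.Icc (0 : ℝ) t, ‖ψ s - ψ 0‖) * (∫ s in (0 : ℝ)..t, ‖W' s‖)
      + 2 * (⨆ s : Set.Icc (0 : ℝ) t, ‖u s - u 0‖) * (∫ s in (0 : ℝ)..t, ‖V' s‖) := by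
  obtain ⟨ht0, htT⟩ := ht
  have hsub : Set.Icc (0:ℝ) t ⊆ Set.Icc 0 T := Set.Icc_subset_Icc le_rfl htT
  have huIcc : Set.uIcc (0:ℝ) t = Set.Icc 0 t := Set.uIcc_of_le ht0
  -- continuity on Icc 0 t
  have hψt := hψ.mono hsub
  have hut := hu.mono hsub
  have hW't := hW'.mono hsub
  have hV't := hV'.mono hsub
  -- integrability of various functions
  have hiW : IntervalIntegrable (fun s => ‖W' s‖) MeasureTheory.volume 0 t :=
    (hW't.norm).intervalIntegrable_of_Icc ht0
  have hiV : IntervalIntegrable (fun s => ‖V' s‖) MeasureTheory.volume 0 t :=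
    (hV't.norm).intervalIntegrable_of_Icc ht0
  -- FTC for U
  have hUint : U t - U 0 = ∫ s in (0:ℝ)..t, (⟪ψ s, W' s⟫ + ⟪u s, V' s⟫) := by
    refine (intervalIntegral.integral_eq_sub_of_hasDerivAt ?_ ?_).symm
    · intro s hs; exact hU s (hsub (huIcc ▸ hs))
    · exact ((hψt.inner hW't).add (hut.inner hV't)).intervalIntegrable_of_Icc ht0
  -- FTC for ⟪ψ t, W ·⟫ and ⟪u t, V ·⟫
  have hWint : ⟪ψ t, W t - W 0⟫ = ∫ s in (0:ℝ)..t, ⟪ψ t, W' s⟫ := by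
    rw [inner_sub_right]
    refine (intervalIntegral.integral_eq_sub_of_hasDerivAt (f := fun s => ⟪ψ t, W s⟫) ?_ ?_).symm
    · intro s hs
      have := (hasDerivAt_const s (ψ t)).inner ℝ (hW s (hsub (huIcc ▸ hs)))
      simpa using this
    · exact ((continuousOn_const (c := ψ t)).inner hW't).intervalIntegrable_of_Icc ht0
  have hVint : ⟪u t, V t - V 0⟫ = ∫ s in (0:ℝ)..t, ⟪u t, V' s⟫ := by
    rw [inner_sub_right]
    refine (intervalIntegral.integral_eq_sub_of_hasDerivAt (f := fun s => ⟪u t, V s⟫) ?_ ?_).symm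
    · intro s hs
      have := (hasDerivAt_const s (u t)).inner ℝ (hV s (hsub (huIcc ▸ hs)))
      simpa using this
    · exact ((continuousOn_const (c := u t)).inner hV't).intervalIntegrable_of_Icc ht0
  -- sups
  set M₁ := ⨆ s : Set.Icc (0:ℝ) t, ‖ψ s - ψ 0‖ with hM₁
  set M₂ := ⨆ s : Set.Icc (0:ℝ) t, ‖u s - u 0‖ with hM₂
  have hne : (Set.Icc (0:ℝ) t).Nonempty := ⟨0, le_rfl, ht0⟩
  have hbdd₁ : BddAbove (Set.range fun s : Set.Icc (0:ℝ) t => ‖ψ s - ψ 0‖) := by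
    obtain ⟨C, hC⟩ := isCompact_Icc.exists_bound_of_continuousOn
      ((hψt.sub continuousOn_const).norm)
    exact ⟨C, by rintro x ⟨s, rfl⟩; simpa using hC s s.2⟩
  have hbdd₂ : BddAbove (Set.range fun s : Set.Icc (0:ℝ) t => ‖u s - u 0‖) := by
    obtain ⟨C, hC⟩ := isCompact_Icc.exists_bound_of_continuousOn
      ((hut.sub continuousOn_const).norm)
    exact ⟨C, by rintro x ⟨s, rfl⟩; simpa using hC s s.2⟩
  have hM₁le : ∀ s ∈ Set.Icc (0:ℝ) t, ‖ψ s - ψ 0‖ ≤ M₁ := fun s hs =>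
    le_ciSup hbdd₁ (⟨s, hs⟩ : Set.Icc (0:ℝ) t)
  have hM₂le : ∀ s ∈ Set.Icc (0:ℝ) t, ‖u s - u 0‖ ≤ M₂ := fun s hs =>
    le_ciSup hbdd₂ (⟨s, hs⟩ : Set.Icc (0:ℝ) t)
  have htmem : t ∈ Set.Icc (0:ℝ) t := ⟨ht0, le_rfl⟩
  have h0mem : (0:ℝ) ∈ Set.Icc (0:ℝ) t := ⟨le_rfl, ht0⟩
  -- rewrite the difference as an integral
  have key : Ξ t - (U t - U 0)
      = ∫ s in (0:ℝ)..t, (⟪ψ t - ψ s, W' s⟫ + ⟪u t - u s, V' s⟫) := by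
    rw [hΞ, hUint, hWint, hVint, ← intervalIntegral.integral_add
      (((continuousOn_const (c := ψ t)).inner hW't).intervalIntegrable_of_Icc ht0)
      (((continuousOn_const (c := u t)).inner hV't).intervalIntegrable_of_Icc ht0),
      ← intervalIntegral.integral_sub
      (((continuousOn_const (c := ψ t)).inner hW't).add
        ((continuousOn_const (c := u t)).inner hV't) |>.intervalIntegrable_of_Icc ht0)
      (((hψt.inner hW't).add (hut.inner hV't)).intervalIntegrable_of_Icc ht0)]
    congr 1; ext s
    simp only [inner_sub_left]; ring
  rw [key]
  -- integrability of the integrand and the bound function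
  have hif : IntervalIntegrable (fun s => ⟪ψ t - ψ s, W' s⟫ + ⟪u t - u s, V' s⟫)
      MeasureTheory.volume 0 t := by
    exact (((continuousOn_const.sub hψt).inner hW't).add
      ((continuousOn_const.sub hut).inner hV't)).intervalIntegrable_of_Icc ht0
  have hig : IntervalIntegrable (fun s => 2 * M₁ * ‖W' s‖ + 2 * M₂ * ‖V' s‖)
      MeasureTheory.volume 0 t := (hiW.const_mul _).add (hiV.const_mul _)
  calc |∫ s in (0:ℝ)..t, (⟪ψ t - ψ s, W' s⟫ + ⟪u t - u s, V' s⟫)|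
      ≤ ∫ s in (0:ℝ)..t, |⟪ψ t - ψ s, W' s⟫ + ⟪u t - u s, V' s⟫| :=
        intervalIntegral.abs_integral_le_integral_abs ht0
    _ ≤ ∫ s in (0:ℝ)..t, (2 * M₁ * ‖W' s‖ + 2 * M₂ * ‖V' s‖) := by
        refine intervalIntegral.integral_mono_on ht0 hif.abs hig ?_
        intro s hs
        have h1 : |⟪ψ t - ψ s, W' s⟫| ≤ ‖ψ t - ψ s‖ * ‖W' s‖ := abs_real_inner_le_norm _ _
        have h2 : |⟪u t - u s, V' s⟫| ≤ ‖u t - u s‖ * ‖V' s‖ := abs_real_inner_le_norm _ _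
        have h3 : ‖ψ t - ψ s‖ ≤ 2 * M₁ := by
          calc ‖ψ t - ψ s‖ ≤ ‖ψ t - ψ 0‖ + ‖ψ s - ψ 0‖ := by
                simpa using norm_sub_le (ψ t - ψ 0) (ψ s - ψ 0)
            _ ≤ M₁ + M₁ := add_le_add (hM₁le t htmem) (hM₁le s hs)
            _ = 2 * M₁ := by ring
        have h4 : ‖u t - u s‖ ≤ 2 * M₂ := by
          calc ‖u t - u s‖ ≤ ‖u t - u 0‖ + ‖u s - u 0‖ := by
                simpa using norm_sub_le (u t - u 0) (u s - u 0)
            _ ≤ M₂ + M₂ := add_le_add (hM₂le t htmem) (hM₂le s hs)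
            _ = 2 * M₂ := by ring
        calc |⟪ψ t - ψ s, W' s⟫ + ⟪u t - u s, V' s⟫|
            ≤ |⟪ψ t - ψ s, W' s⟫| + |⟪u t - u s, V' s⟫| := abs_add_le _ _
          _ ≤ ‖ψ t - ψ s‖ * ‖W' s‖ + ‖u t - u s‖ * ‖V' s‖ := add_le_add h1 h2
          _ ≤ 2 * M₁ * ‖W' s‖ + 2 * M₂ * ‖V' s‖ :=
              add_le_add (mul_le_mul_of_nonneg_right h3 (norm_nonneg _))
                (mul_le_mul_of_nonneg_right h4 (norm_nonneg _))
    _ = 2 * M₁ * (∫ s in (0:ℝ)..t, ‖W' s‖) + 2 * M₂ * (∫ s in (0:ℝ)..t, ‖V' s‖) := by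
        rw [intervalIntegral.integral_add (hiW.const_mul _) (hiV.const_mul _),
          intervalIntegral.integral_const_mul, intervalIntegral.integral_const_mul]
end

section
/- Let E be a finite-dimensional real inner product space, L : E → ℝ convex and continuously differentiable, λ > 0 and W₀ ∈ E. Define C(W) = L(W) + (λ/2)‖W−W₀‖². If W : [0,∞) → E is differentiable with W'(t) = −∇C(W(t)) and W(0) = W₀, then the regulariser R(t) = ½‖W(t)−W₀‖² satisfies, for every t ≥ 0, R(t) ≤ (1/λ) (C(W₀) − C(W(t))) (1 − e^{−λt}). -/
/-!
Along the flow, `R' = -⟪∇C(W), W - W₀⟫`. Splitting `∇C(W) = ∇L(W) + λ(W - W₀)` and using the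
gradient inequality of the convex `L` at `W` gives `R' ≤ C(W₀) - C(W) - λR`. Since `C` decreases
along its own gradient flow, on `[0, t]` this is at most `(C(W₀) - C(W(t))) - λR`: a linear
differential inequality with `R(0) = 0`, whose Grönwall bound is the claimed estimate.
-/

open Set Real
open scoped RealInnerProductSpace

theorem ConvexOn.fderiv_apply_sub_le {E : Type*} [NormedAddCommGroup E] [NormedSpace ℝ E]
    {f : E → ℝ} {s : Set E} (hf : ConvexOn ℝ s f) {x y : E} (hx : x ∈ s) (hy : y ∈ s)
    (hfx : DifferentiableAt ℝ f x) :
    fderiv ℝ f x (y - x) ≤ f y - f x := by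
  have hline : HasDerivAt (f ∘ AffineMap.lineMap (k := ℝ) x y) (fderiv ℝ f x (y - x)) 0 := by
    have hfx' : HasFDerivAt f (fderiv ℝ f x) (AffineMap.lineMap x y (0 : ℝ)) := by
      simpa using hfx.hasFDerivAt
    exact hfx'.comp_hasDerivAt 0 AffineMap.hasDerivAt_lineMap
  simpa [slope_def_field] using
    (hf.comp_affineMap (AffineMap.lineMap x y)).le_slope_of_hasDerivAt (x := 0) (y := 1)
      (by simpa) (by simpa) one_pos hline

theorem le_mul_one_sub_exp_of_deriv_le_sub_mul
    {f f' : ℝ → ℝ} {A lam t : ℝ} (hlam : lam ≠ 0)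
    (hf : ContinuousOn f (Icc 0 t)) (hf' : ∀ s ∈ Ico 0 t, HasDerivWithinAt f (f' s) (Ici s) s)
    (h0 : f 0 ≤ 0) (bound : ∀ s ∈ Ico 0 t, f' s ≤ A - lam * f s) (ht : 0 ≤ t) :
    f t ≤ 1 / lam * A * (1 - exp (-lam * t)) := by
  have hgronwall := le_gronwallBound_of_liminf_deriv_right_le (K := -lam) (ε := A) hf
    (fun s hs _ hr => (hf' s hs).liminf_right_slope_le hr) h0
    (fun s hs => (bound s hs).trans_eq (by ring)) t ⟨ht, le_rfl⟩
  rw [gronwallBound_of_K_ne_0 (neg_ne_zero.2 hlam)] at hgronwall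
  simp only [zero_mul, zero_add, sub_zero] at hgronwall
  convert hgronwall using 1
  field_simp
  ring

section GradientFlow

variable {E : Type*} [NormedAddCommGroup E] [InnerProductSpace ℝ E]

noncomputable def regularized (L : E → ℝ) (lam : ℝ) (W₀ w : E) : ℝ :=
  L w + lam / 2 * ‖w - W₀‖ ^ 2

theorem HasFDerivAt.regularized {L : E → ℝ} {L' : StrongDual ℝ E} {w : E}
    (hL : HasFDerivAt L L' w) (lam : ℝ) (W₀ : E) :
    HasFDerivAt (regularized L lam W₀) (L' + lam • innerSL ℝ (w - W₀)) w := by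
  refine (hL.add (((hasFDerivAt_id w).sub_const W₀).norm_sq.const_mul (lam / 2))).congr_fderiv ?_
  ext v
  simp only [id_eq, map_sub, ContinuousLinearMap.comp_id, add_apply, smul_apply, sub_apply,
    coe_innerSL_apply, nsmul_eq_mul, Nat.cast_ofNat, smul_eq_mul]
  ring

variable [CompleteSpace E]

theorem inner_gradient_regularized {L : E → ℝ} {w : E} (hL : DifferentiableAt ℝ L w)
    (lam : ℝ) (W₀ v : E) :
    ⟪gradient (regularized L lam W₀) w, v⟫ = fderiv ℝ L w v + lam * ⟪w - W₀, v⟫ := by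
  rw [inner_gradient_left, (hL.hasFDerivAt.regularized lam W₀).fderiv]
  simp [inner_sub_left]

theorem neg_inner_gradient_regularized_le {L : E → ℝ} {s : Set E} {w W₀ : E}
    (hconv : ConvexOn ℝ s L) (hw : w ∈ s) (hW₀ : W₀ ∈ s) (hL : DifferentiableAt ℝ L w)
    (lam : ℝ) :
    -⟪gradient (regularized L lam W₀) w, w - W₀⟫
      ≤ regularized L lam W₀ W₀ - regularized L lam W₀ w - lam * (1 / 2 * ‖w - W₀‖ ^ 2) := by
  have hgrad := hconv.fderiv_apply_sub_le hw hW₀ hL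
  rw [← neg_sub w W₀, map_neg] at hgrad
  rw [inner_gradient_regularized hL, real_inner_self_eq_norm_sq]
  simp only [regularized, sub_self, norm_zero]
  linarith

theorem antitone_comp_of_hasDerivAt_neg_gradient {C : E → ℝ} {W : ℝ → E}
    (hC : ∀ t, DifferentiableAt ℝ C (W t)) (hW : ∀ t, HasDerivAt W (-gradient C (W t)) t) :
    Antitone (C ∘ W) := by
  refine antitone_of_hasDerivAt_nonpos (fun t => (hC t).hasFDerivAt.comp_hasDerivAt t (hW t))
    fun t => ?_
  rw [← inner_gradient_left, inner_neg_right, real_inner_self_eq_norm_sq]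
  exact neg_nonpos.2 (sq_nonneg _)

end GradientFlow

/-- For a convex C¹ loss `L` on a finite-dimensional real inner
product space, `λ > 0`, `C(W) = L(W) + (λ/2)‖W−W₀‖²`, and `W` solving the gradient
flow `W'(t) = −∇C(W(t))` with `W(0) = W₀`, the regulariser `R(t) = ½‖W(t)−W₀‖²`
satisfies `R(t) ≤ (1/λ)(C(W₀) − C(W(t)))(1 − e^{−λt})` for every `t ≥ 0`. -/
theorem stmt6 {E : Type*} [NormedAddCommGroup E] [InnerProductSpace ℝ E]
    [FiniteDimensional ℝ E]
    (L : E → ℝ) (hL : ContDiff ℝ 1 L) (hconv : ConvexOn ℝ Set.univ L)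
    (lam : ℝ) (hlam : 0 < lam) (W₀ : E)
    (C : E → ℝ) (hC : ∀ w, C w = L w + lam / 2 * ‖w - W₀‖ ^ 2)
    (W : ℝ → E) (R : ℝ → ℝ) (hR : ∀ t, R t = 1 / 2 * ‖W t - W₀‖ ^ 2)
    (hW0 : W 0 = W₀)
    (hW : ∀ t : ℝ, HasDerivAt W (-gradient C (W t)) t)
    (t : ℝ) (ht : 0 ≤ t) :
    R t ≤ (1 / lam) * (C W₀ - C (W t)) * (1 - Real.exp (-lam * t)) := by
  obtain rfl : C = regularized L lam W₀ := funext hC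
  have hLd : Differentiable ℝ L := hL.differentiable one_ne_zero
  have hdecay := antitone_comp_of_hasDerivAt_neg_gradient
    (fun s => ((hLd (W s)).hasFDerivAt.regularized lam W₀).differentiableAt) hW
  have hR' : ∀ s, HasDerivAt R (-⟪gradient (regularized L lam W₀) (W s), W s - W₀⟫) s := by
    intro s
    rw [funext hR]
    refine (((hW s).sub_const W₀).norm_sq.const_mul (1 / 2 : ℝ)).congr_deriv ?_
    rw [inner_neg_right, real_inner_comm]
    ring
  refine le_mul_one_sub_exp_of_deriv_le_sub_mul hlam.ne'
    (fun s _ => (hR' s).continuousAt.continuousWithinAt) (fun s _ => (hR' s).hasDerivWithinAt) (by simp [hR, hW0]) (fun s hs => ?_) ht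
  calc _ ≤ regularized L lam W₀ W₀ - regularized L lam W₀ (W s) - lam * R s := by
        rw [hR]
        exact neg_inner_gradient_regularized_le hconv (mem_univ _) (mem_univ _) (hLd _) lam
    _ ≤ _ := by
        gcongr
        exact hdecay hs.2.le
end

section
/- Let E be a finite-dimensional real inner product space, L : E → ℝ convex and continuously differentiable, λ > 0 and W₀ ∈ E. Define C(W) = L(W) + (λ/2)‖W−W₀‖². If W : [0,∞) → E is differentiable with W'(t) = −∇C(W(t)) and W(0) = W₀, then for every t ≥ 0 the regulariser R(t) = ½‖W(t)−W₀‖² is controlled by the decrease of the unregularised loss: λ R(t) ≤ ((1 − e^{−λt}) / (2 − e^{−λt})) (L(W₀) − L(W(t))). -/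
/-!
Along the flow `R' = ⟪W - W₀, -∇C(W)⟫`. The supporting-hyperplane inequality of the convex `L`
at `W` bounds this by `C(W₀) - C(W) - λR`, and since `C ∘ W` is non-increasing, by
`D - λR` on `[0, t]` with `D = C(W₀) - C(W(t))`. Grönwall gives `λR(t) ≤ (1 - e^{-λt}) D`;
substituting `D = (L(W₀) - L(W(t))) - λR(t)` and solving for `λR(t)` gives the bound.
-/

open InnerProductSpace Set Real
open scoped RealInnerProductSpace

theorem le_div_mul_one_sub_exp_of_hasDerivAt_le {f f' : ℝ → ℝ} {lam D t : ℝ} (hlam : lam ≠ 0)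
    (ht : 0 ≤ t) (hf : ∀ s ∈ Icc 0 t, HasDerivAt f (f' s) s) (h₀ : f 0 = 0)
    (hbound : ∀ s ∈ Ico 0 t, f' s ≤ D - lam * f s) :
    f t ≤ D / lam * (1 - exp (-lam * t)) := by
  have hgron := le_gronwallBound_of_liminf_deriv_right_le (δ := 0) (K := -lam) (ε := D)
    (fun s hs => (hf s hs).continuousAt.continuousWithinAt)
    (fun s hs _ hr => (hf s (Ico_subset_Icc_self hs)).hasDerivWithinAt.liminf_right_slope_le hr)
    h₀.le (fun s hs => by linarith [hbound s hs]) t ⟨ht, le_rfl⟩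
  rw [gronwallBound_of_K_ne_0 (neg_ne_zero.2 hlam)] at hgron
  convert hgron using 1
  beta_reduce
  rw [sub_zero, div_neg]
  ring

section

variable {E : Type*} [NormedAddCommGroup E] [InnerProductSpace ℝ E] [CompleteSpace E]

theorem ConvexOn.add_inner_gradient_le {f : E → ℝ} (hf : ConvexOn ℝ univ f) {x : E}
    (hx : DifferentiableAt ℝ f x) (y : E) : f x + ⟪gradient f x, y - x⟫ ≤ f y := by
  have hline : ConvexOn ℝ univ (f ∘ AffineMap.lineMap (k := ℝ) x y) := by
    simpa using hf.comp_affineMap (AffineMap.lineMap x y)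
  have hderiv : HasDerivAt (f ∘ AffineMap.lineMap (k := ℝ) x y) ⟪gradient f x, y - x⟫ 0 := by
    have hfx : HasFDerivAt f (fderiv ℝ f x) (AffineMap.lineMap x y (0 : ℝ)) := by
      simpa using hx.hasFDerivAt
    simpa [inner_gradient_left] using hfx.comp_hasDerivAt 0 AffineMap.hasDerivAt_lineMap
  have hslope := hline.le_slope_of_hasDerivAt (mem_univ 0) (mem_univ 1) one_pos hderiv
  simp only [slope_def_field, Function.comp_apply, AffineMap.lineMap_apply_zero,
    AffineMap.lineMap_apply_one, sub_zero, div_one] at hslope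
  linarith

theorem hasGradientAt_add_mul_norm_sub_sq {f : E → ℝ} {x : E} (hf : DifferentiableAt ℝ f x)
    (c : ℝ) (x₀ : E) :
    HasGradientAt (fun w => f w + c / 2 * ‖w - x₀‖ ^ 2) (gradient f x + c • (x - x₀)) x := by
  rw [hasGradientAt_iff_hasFDerivAt]
  refine (hf.hasFDerivAt.add
    (((hasFDerivAt_id x).sub_const x₀).norm_sq.const_mul (c / 2))).congr_fderiv ?_
  ext u
  simp only [id_eq, map_sub, ContinuousLinearMap.comp_id, add_apply,
    smul_apply, sub_apply, coe_innerSL_apply, nsmul_eq_mul,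
    Nat.cast_ofNat, smul_eq_mul, map_add, toDual_gradient, map_smul, toDual_apply_apply,
    add_right_inj]
  ring

theorem antitone_comp_of_hasDerivAt_neg_gradient_s7 {f : E → ℝ} {γ : ℝ → E}
    (hf : Differentiable ℝ f) (hγ : ∀ s, HasDerivAt γ (-gradient f (γ s)) s) :
    Antitone (f ∘ γ) := by
  refine antitone_of_hasDerivAt_nonpos (f' := fun s => -‖gradient f (γ s)‖ ^ 2) (fun s => ?_)
    fun s => neg_nonpos.2 (sq_nonneg _)
  simpa [← inner_gradient_left, real_inner_self_eq_norm_sq] using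
    (hf (γ s)).hasFDerivAt.comp_hasDerivAt s (hγ s)

theorem inner_sub_neg_gradient_add_mul_le {f : E → ℝ} (hf : ConvexOn ℝ univ f) {x : E}
    (hx : DifferentiableAt ℝ f x) (c : ℝ) (x₀ : E) :
    ⟪x - x₀, -(gradient f x + c • (x - x₀))⟫ ≤
      (f x₀ - (f x + c / 2 * ‖x - x₀‖ ^ 2)) - c * (1 / 2 * ‖x - x₀‖ ^ 2) := by
  have hsupp := hf.add_inner_gradient_le hx x₀
  have hflip : ⟪gradient f x, x₀ - x⟫ = -⟪x - x₀, gradient f x⟫ := by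
    rw [← neg_sub x x₀, inner_neg_right, real_inner_comm]
  rw [inner_neg_right, inner_add_right, real_inner_smul_right, real_inner_self_eq_norm_sq]
  linarith

end

/-- For a convex C¹ loss `L` on a finite-dimensional real inner
product space, `λ > 0`, `C(W) = L(W) + (λ/2)‖W−W₀‖²`, and `W` solving the gradient
flow `W'(t) = −∇C(W(t))` with `W(0) = W₀`, the regulariser `R(t) = ½‖W(t)−W₀‖²`
is controlled by the decrease of the unregularised loss:
`λ R(t) ≤ ((1 − e^{−λt})/(2 − e^{−λt})) (L(W₀) − L(W(t)))` for every `t ≥ 0`. -/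
theorem stmt7 {E : Type*} [NormedAddCommGroup E] [InnerProductSpace ℝ E]
    [FiniteDimensional ℝ E]
    (L : E → ℝ) (hL : ContDiff ℝ 1 L) (hconv : ConvexOn ℝ Set.univ L)
    (lam : ℝ) (hlam : 0 < lam) (W₀ : E)
    (C : E → ℝ) (hC : ∀ w, C w = L w + lam / 2 * ‖w - W₀‖ ^ 2)
    (W : ℝ → E) (R : ℝ → ℝ) (hR : ∀ t, R t = 1 / 2 * ‖W t - W₀‖ ^ 2)
    (hW0 : W 0 = W₀)
    (hW : ∀ t : ℝ, HasDerivAt W (-gradient C (W t)) t)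
    (t : ℝ) (ht : 0 ≤ t) :
    lam * R t ≤
      ((1 - Real.exp (-lam * t)) / (2 - Real.exp (-lam * t))) * (L W₀ - L (W t)) := by
  have hLd : Differentiable ℝ L := hL.differentiable one_ne_zero
  obtain rfl : C = fun w => L w + lam / 2 * ‖w - W₀‖ ^ 2 := funext hC
  obtain rfl : R = fun s => 1 / 2 * ‖W s - W₀‖ ^ 2 := funext hR
  have hgradC w := hasGradientAt_add_mul_norm_sub_sq (hLd w) lam W₀
  have hCanti := antitone_comp_of_hasDerivAt_neg_gradient_s7
    (fun w => (hgradC w).differentiableAt) hW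
  have hRderiv s : HasDerivAt (fun s => 1 / 2 * ‖W s - W₀‖ ^ 2)
      ⟪W s - W₀, -(gradient L (W s) + lam • (W s - W₀))⟫ s := by
    rw [← (hgradC (W s)).gradient]
    exact ((((hW s).sub_const W₀).norm_sq).const_mul (1 / 2)).congr_deriv (by ring)
  have hdecay s (hs : s ∈ Ico 0 t) :
      ⟪W s - W₀, -(gradient L (W s) + lam • (W s - W₀))⟫ ≤
        L W₀ - (L (W t) + lam / 2 * ‖W t - W₀‖ ^ 2) - lam * (1 / 2 * ‖W s - W₀‖ ^ 2) := by
    have hCst := hCanti hs.2.le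
    simp only [Function.comp_apply] at hCst
    linarith [inner_sub_neg_gradient_add_mul_le hconv (hLd (W s)) lam W₀]
  have hRt := le_div_mul_one_sub_exp_of_hasDerivAt_le hlam.ne' ht (fun s _ => hRderiv s)
    (by simp [hW0]) hdecay
  beta_reduce at hRt ⊢
  have he : exp (-lam * t) ≤ 1 := exp_le_one_iff.2 (by nlinarith)
  generalize exp (-lam * t) = e at he hRt ⊢
  generalize ‖W t - W₀‖ ^ 2 = n at hRt ⊢
  rw [div_mul_eq_mul_div (1 - e), le_div_iff₀ (by linarith)]
  rw [div_mul_eq_mul_div _ lam, le_div_iff₀ hlam] at hRt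
  nlinarith
end

section
/- Let Θ be an m×m real symmetric positive semidefinite matrix, λ > 0, V = (λ/2)I + Θ (which is invertible), and Y, M₀ ∈ ℝ^m. Then the function M(t) = M₀ + (I − exp(−2tV)) V^{−1} Θ (Y − M₀) is the unique solution of the linear ODE ∂_t M(t) = −2Θ(M(t) − Y) − λ(M(t) − M₀) with initial condition M(0) = M₀. -/
/-!
With `B = -2V` and `b = 2ΘY + λM₀` the equation is the affine system `x' = Bx + b`. Its
right-hand side is globally Lipschitz, so solutions are unique by Picard–Lindelöf. Since
`V = (λ/2)I + Θ` is positive definite, the system has the equilibrium `M₀ + V⁻¹Θ(Y − M₀)`, and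
`M(t)` is this equilibrium plus `exp(tB)` applied to a fixed vector, hence a solution.
-/

open Matrix

section

variable {n : Type*} [Fintype n]

theorem eq_of_hasDerivAt_mulVec_add (B : Matrix n n ℝ) (b : n → ℝ) {f g : ℝ → n → ℝ}
    {t₀ : ℝ} (hf : ∀ t, HasDerivAt f (B *ᵥ f t + b) t) (hg : ∀ t, HasDerivAt g (B *ᵥ g t + b) t)
    (h : f t₀ = g t₀) : f = g := by
  have hlip : LipschitzWith _ fun x => B *ᵥ x + b :=
    (LinearMap.toContinuousLinearMap B.mulVecLin).lipschitz.add (LipschitzWith.const b)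
  exact ODE_solution_unique_univ (v := fun _ x => B *ᵥ x + b) (s := fun _ => Set.univ)
    (fun _ => hlip.lipschitzOnWith) (fun t => ⟨hf t, trivial⟩) (fun t => ⟨hg t, trivial⟩) h

variable [DecidableEq n]

theorem hasDerivAt_exp_smul_mulVec (A : Matrix n n ℝ) (x : n → ℝ) (t : ℝ) :
    HasDerivAt (fun u => NormedSpace.exp (u • A) *ᵥ x) (A *ᵥ (NormedSpace.exp (t • A) *ᵥ x)) t := by
  -- any Banach-algebra norm on matrices gives access to the derivative of `exp`
  let := Matrix.linftyOpNormedRing (n := n) (α := ℝ)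
  let := Matrix.linftyOpNormedAlgebra (n := n) (R := ℝ) (α := ℝ)
  let evalAt : Matrix n n ℝ →L[ℝ] n → ℝ :=
    LinearMap.toContinuousLinearMap ((LinearMap.applyₗ x).comp Matrix.toLin'.toLinearMap)
  rw [mulVec_mulVec]
  exact evalAt.hasFDerivAt.comp_hasDerivAt t (hasDerivAt_exp_smul_const' A t)

theorem hasDerivAt_add_exp_smul_mulVec {B : Matrix n n ℝ} {b p : n → ℝ} (hp : B *ᵥ p + b = 0)
    (q : n → ℝ) (t : ℝ) :
    HasDerivAt (fun u => p + NormedSpace.exp (u • B) *ᵥ q)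
      (B *ᵥ (p + NormedSpace.exp (t • B) *ᵥ q) + b) t := by
  rw [mulVec_add, add_right_comm, hp, zero_add]
  exact (hasDerivAt_exp_smul_mulVec B q t).const_add p

end

theorem stmt13_general {m : ℕ} (Θ : Matrix (Fin m) (Fin m) ℝ)
    (hpsd : Θ.PosSemidef)
    (lam : ℝ) (hlam : 0 < lam) (Y M₀ : Fin m → ℝ)
    (V : Matrix (Fin m) (Fin m) ℝ)
    (hV : V = (lam / 2) • (1 : Matrix (Fin m) (Fin m) ℝ) + Θ)
    (M : ℝ → Fin m → ℝ)
    (hM : ∀ t : ℝ, M t =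
      M₀ + ((1 - NormedSpace.exp (-((2 * t) • V))) * (V⁻¹ * Θ)) *ᵥ (Y - M₀)) :
    IsUnit V ∧
    M 0 = M₀ ∧
    (∀ t : ℝ, HasDerivAt M (-((2 : ℝ) • (Θ *ᵥ (M t - Y))) - lam • (M t - M₀)) t) ∧
    (∀ N : ℝ → Fin m → ℝ, N 0 = M₀ →
      (∀ t : ℝ, HasDerivAt N (-((2 : ℝ) • (Θ *ᵥ (N t - Y))) - lam • (N t - M₀)) t) →
      N = M) := by
  have hVpd : V.PosDef := hV ▸ (PosDef.one.smul (half_pos hlam)).add_posSemidef hpsd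
  set B := (-2 : ℝ) • V
  set b := (2 : ℝ) • (Θ *ᵥ Y) + lam • M₀
  set c := (V⁻¹ * Θ) *ᵥ (Y - M₀)
  have hrhs (x : Fin m → ℝ) : -((2 : ℝ) • (Θ *ᵥ (x - Y))) - lam • (x - M₀) = B *ᵥ x + b := by
    simp only [B, b, hV, smul_mulVec, add_mulVec, one_mulVec, mulVec_sub]
    module
  have hVc : V *ᵥ c = Θ *ᵥ (Y - M₀) := by
    rw [mulVec_mulVec, ← Matrix.mul_assoc,
      mul_nonsing_inv _ (V.isUnit_iff_isUnit_det.mp hVpd.isUnit), Matrix.one_mul]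
  have hequilibrium : B *ᵥ (M₀ + c) + b = 0 := by
    simp only [B, b, mulVec_add, smul_mulVec, hVc]
    rw [hV]
    simp only [add_mulVec, smul_mulVec, one_mulVec, mulVec_sub]
    module
  have hMexp : M = fun t => (M₀ + c) + NormedSpace.exp (t • B) *ᵥ (-c) := by
    funext t
    rw [hM, show -((2 * t) • V) = t • B by module, Matrix.sub_mul, Matrix.one_mul, sub_mulVec,
      ← mulVec_mulVec (Y - M₀) (NormedSpace.exp _), mulVec_neg]
    abel
  have hderiv (t : ℝ) : HasDerivAt M (B *ᵥ M t + b) t :=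
    hMexp ▸ hasDerivAt_add_exp_smul_mulVec hequilibrium (-c) t
  have hM0 : M 0 = M₀ := by simp [hMexp]
  simp only [hrhs]
  exact ⟨hVpd.isUnit, hM0, hderiv, fun N hN0 hN =>
    eq_of_hasDerivAt_mulVec_add B b hN hderiv (hN0.trans hM0.symm)⟩

/-- For an `m×m` real symmetric positive semidefinite matrix `Θ`,
`λ > 0`, `V = (λ/2)I + Θ` (which is invertible) and `Y, M₀ ∈ ℝ^m`, the function
`M(t) = M₀ + (I − exp(−2tV)) V⁻¹ Θ (Y − M₀)` is the unique solution of
`∂_t M(t) = −2Θ(M(t) − Y) − λ(M(t) − M₀)` with `M(0) = M₀`. -/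
theorem stmt13 {m : ℕ} (Θ : Matrix (Fin m) (Fin m) ℝ)
    (hsym : Θ.IsSymm) (hpsd : Θ.PosSemidef)
    (lam : ℝ) (hlam : 0 < lam) (Y M₀ : Fin m → ℝ)
    (V : Matrix (Fin m) (Fin m) ℝ)
    (hV : V = (lam / 2) • (1 : Matrix (Fin m) (Fin m) ℝ) + Θ)
    (M : ℝ → Fin m → ℝ)
    (hM : ∀ t : ℝ, M t =
      M₀ + ((1 - NormedSpace.exp (-((2 * t) • V))) * (V⁻¹ * Θ)) *ᵥ (Y - M₀)) :
    IsUnit V ∧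
    M 0 = M₀ ∧
    (∀ t : ℝ, HasDerivAt M (-((2 : ℝ) • (Θ *ᵥ (M t - Y))) - lam • (M t - M₀)) t) ∧
    (∀ N : ℝ → Fin m → ℝ, N 0 = M₀ →
      (∀ t : ℝ, HasDerivAt N (-((2 : ℝ) • (Θ *ᵥ (N t - Y))) - lam • (N t - M₀)) t) →
      N = M) :=
  stmt13_general Θ hpsd lam hlam Y M₀ V hV M hM
end

section
/- Let Θ be an m×m real symmetric positive semidefinite matrix, λ > 0, V = (λ/2)I + Θ, and Y, M₀ ∈ ℝ^m, and set M∞ = M₀ + V^{−1}Θ(Y − M₀). Define R∞ by the stationarity relation (2/m)(M∞ − M₀)·(M∞ − Y) = −2λ R∞. Then R∞ = (1/(2m)) (M₀ − Y)ᵀ V^{−2}Θ (M₀ − Y). -/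
/-!
Write `x = M₀ - Y` and `A = V⁻¹Θ`. Since `V - Θ = (λ/2)I`, both `V⁻¹Θ` and `ΘV⁻¹` equal
`I - (λ/2)V⁻¹`; so `A` is symmetric and commutes with `V⁻¹`. Then `M∞ - M₀ = -Ax` and
`M∞ - Y = (I - A)x = (λ/2)V⁻¹x`, whence `(M∞ - M₀)·(M∞ - Y) = -(λ/2) xᵀAV⁻¹x = -(λ/2) xᵀV⁻²Θx`,
and the stationarity relation is solved for `R∞`.
-/

open Matrix

namespace Matrix

section

variable {n R : Type*} [Fintype n] [CommRing R]

theorem IsSymm.mulVec_dotProduct {A : Matrix n n R} (hA : A.IsSymm) (u v : n → R) :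
    (A *ᵥ u) ⬝ᵥ v = u ⬝ᵥ (A *ᵥ v) := by
  rw [dotProduct_mulVec, ← mulVec_transpose, hA.eq]

variable [DecidableEq n] {Θ V : Matrix n n R} {c : R}

theorem inv_mul_eq_one_sub_smul_inv (hV : IsUnit V.det) (hVΘ : V = c • 1 + Θ) :
    V⁻¹ * Θ = 1 - c • V⁻¹ := by
  rw [eq_sub_iff_add_eq, ← mul_smul_one, ← Matrix.mul_add, add_comm, ← hVΘ,
    nonsing_inv_mul V hV]

theorem mul_inv_eq_one_sub_smul_inv (hV : IsUnit V.det) (hVΘ : V = c • 1 + Θ) :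
    Θ * V⁻¹ = 1 - c • V⁻¹ := by
  rw [eq_sub_iff_add_eq, ← smul_one_mul, ← Matrix.add_mul, add_comm, ← hVΘ,
    mul_nonsing_inv V hV]

theorem inv_mul_mulVec_dotProduct_add_sub (hΘ : Θ.IsSymm) (hV : IsUnit V.det)
    (hVΘ : V = c • 1 + Θ) (Y M₀ : n → R) :
    ((V⁻¹ * Θ) *ᵥ (Y - M₀)) ⬝ᵥ (M₀ + (V⁻¹ * Θ) *ᵥ (Y - M₀) - Y) =
      -(c * ((M₀ - Y) ⬝ᵥ ((V⁻¹ * V⁻¹ * Θ) *ᵥ (M₀ - Y)))) := by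
  have hA := inv_mul_eq_one_sub_smul_inv hV hVΘ
  have hVinv_symm : V⁻¹.IsSymm := (hVΘ ▸ (isSymm_one.smul c).add hΘ : V.IsSymm).inv
  have hA_symm : (V⁻¹ * Θ).IsSymm := hA ▸ isSymm_one.sub (hVinv_symm.smul c)
  have hdisp : M₀ + (V⁻¹ * Θ) *ᵥ (Y - M₀) - Y = c • (V⁻¹ *ᵥ (M₀ - Y)) := by
    have hB : c • V⁻¹ = 1 - V⁻¹ * Θ := by rw [hA, sub_sub_cancel]
    rw [← smul_mulVec, hB, sub_mulVec, one_mulVec, ← neg_sub M₀ Y, mulVec_neg]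
    abel
  have hcomm : V⁻¹ * Θ * V⁻¹ = V⁻¹ * V⁻¹ * Θ := by
    rw [Matrix.mul_assoc, Matrix.mul_assoc, mul_inv_eq_one_sub_smul_inv hV hVΘ, hA]
  rw [hdisp, ← neg_sub M₀ Y, mulVec_neg, neg_dotProduct, hA_symm.mulVec_dotProduct,
    mulVec_smul, dotProduct_smul, mulVec_mulVec, hcomm, smul_eq_mul]

end

end Matrix

/-- With `Θ` an `m×m` real symmetric positive semidefinite matrix,
`λ > 0`, `V = (λ/2)I + Θ`, `Y, M₀ ∈ ℝ^m` and `M∞ = M₀ + V⁻¹Θ(Y − M₀)`, if `R∞` is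
defined by the stationarity relation `(2/m)(M∞ − M₀)·(M∞ − Y) = −2λR∞`, then
`R∞ = (1/(2m))(M₀ − Y)ᵀ V⁻²Θ (M₀ − Y)`. -/
theorem stmt15 {m : ℕ} (Θ : Matrix (Fin m) (Fin m) ℝ)
    (hsym : Θ.IsSymm) (hpsd : Θ.PosSemidef)
    (lam : ℝ) (hlam : 0 < lam) (Y M₀ : Fin m → ℝ)
    (V : Matrix (Fin m) (Fin m) ℝ)
    (hV : V = (lam / 2) • (1 : Matrix (Fin m) (Fin m) ℝ) + Θ)
    (Minf : Fin m → ℝ) (hMinf : Minf = M₀ + (V⁻¹ * Θ) *ᵥ (Y - M₀))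
    (Rinf : ℝ)
    (hRinf : (2 / (m : ℝ)) * ((Minf - M₀) ⬝ᵥ (Minf - Y)) = -(2 * lam * Rinf)) :
    Rinf = (1 / (2 * (m : ℝ))) * ((M₀ - Y) ⬝ᵥ ((V⁻¹ * V⁻¹ * Θ) *ᵥ (M₀ - Y))) := by
  have hVdet : IsUnit V.det :=
    (hV ▸ (PosDef.one.smul (half_pos hlam)).add_posSemidef hpsd : V.PosDef).isUnit.map
      detMonoidHom
  rw [hMinf, add_sub_cancel_left, inv_mul_mulVec_dotProduct_add_sub hsym hVdet hV] at hRinf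
  apply mul_left_cancel₀ hlam.ne'
  -- `ring` treats `(m : ℝ)⁻¹` as an atom, so `m = 0` (where both sides vanish) needs no case split.
  linear_combination (1 / 2 : ℝ) * hRinf
end
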